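/- The k-NN clustering with the maximum number of clusters is unique: if {C_i} and {C'_j} are two partitions of X, each of whose cells contains the k nearest neighbors of all its elements, and both achieve the maximal possible number of cells among all such partitions, then the two partitions are equal. -/

import Mathlib

open Finset

variable {X : Type*} [MetricSpace X] [Fintype X] [LinearOrder X]

/-- Tie-breaking key: `y` is compared to other points by distance to `x`,
with ties broken by the fixed linear order on `X`. -/
noncomputable def nnKey (x y : X) : ℝ ×ₗ X := toLex (dist x y, y)

noncomputable instance nnKeyDec (x : X) :
    DecidableRel (fun y z : X => nnKey x y ≤ nnKey x z) :=
  fun _ _ => Classical.dec _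

instance (x : X) : IsTrans X (fun y z => nnKey x y ≤ nnKey x z) :=
  ⟨fun _ _ _ h1 h2 => le_trans h1 h2⟩

instance (x : X) : IsAntisymm X (fun y z => nnKey x y ≤ nnKey x z) :=
  ⟨fun a b h1 h2 => by
    have h := le_antisymm h1 h2
    simpa [nnKey] using congrArg (fun p => (ofLex p).2) h⟩

instance (x : X) : IsTotal X (fun y z => nnKey x y ≤ nnKey x z) :=
  ⟨fun _ _ => le_total _ _⟩

/-- The points of `X \ {x}` listed in order of increasing distance to `x`
(ties broken by the fixed linear order). -/
noncomputable def nnList (x : X) : List X :=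
  (Finset.univ.erase x).sort (fun y z => nnKey x y ≤ nnKey x z)

/-- `nbhd k x` is the set `N_k(x)` of the `k` nearest neighbors of `x`. -/
noncomputable def nbhd (k : ℕ) (x : X) : Finset X :=
  ((nnList x).take k).toFinset

/-- The `k`-nearest-neighbor graph: `x — y` iff `y ∈ N_k(x)` or `x ∈ N_k(y)`. -/
noncomputable def nnGraph (k : ℕ) : SimpleGraph X where
  Adj x y := x ≠ y ∧ (y ∈ nbhd k x ∨ x ∈ nbhd k y)
  symm := by
    constructor
    intro x y h
    exact ⟨h.1.symm, h.2.symm⟩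
  loopless := by constructor; intro x h; exact h.1 rfl

/-- The cluster (connected component of the `k`-NN graph) containing `x`. -/
noncomputable def nnCluster (k : ℕ) (x : X) : Finset X := by
  classical
  exact Finset.univ.filter (fun y => (nnGraph (X := X) k).Reachable x y)

/-- The partition of `X` into connected components of the `k`-NN graph:
the maximal `k`-NN clustering. -/
noncomputable def maxClusters (k : ℕ) : Finset (Finset X) :=
  Finset.univ.image (nnCluster (X := X) k)

/-- A partition of `X` each of whose cells contains the `k` nearest
neighbors of all of its elements. -/
def IsKNNClustering (k : ℕ) (P : Finset (Finset X)) : Prop :=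
  (∀ C ∈ P, C.Nonempty) ∧
  (∀ C ∈ P, ∀ D ∈ P, C ≠ D → Disjoint C D) ∧
  (P.sup id = Finset.univ) ∧
  (∀ C ∈ P, ∀ x ∈ C, nbhd k x ⊆ C)

/-- All pairwise distances are distinct (for distinct unordered pairs). -/
def DistinctDists (X : Type*) [MetricSpace X] : Prop :=
  ∀ x y x' y' : X, x ≠ y → x' ≠ y' → dist x y = dist x' y' →
    (x = x' ∧ y = y') ∨ (x = y' ∧ y = x')

/-- The nearest neighbor of `x` (meaningful when `|X| ≥ 2`). -/
noncomputable def nn (x : X) : X := ((nnList x).head?).getD x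


/-! Each cell of a `k`-NN clustering is closed under adjacency in the `k`-NN graph (in both
directions, because the cells partition `X`), so it is a union of connected components; and the
components themselves form a `k`-NN clustering. A cell `C` that is more than the component `K` of
one of its points can be split into `K` and `C \ K`, both closed under taking `k` nearest
neighbors, giving a clustering with one more cell. Hence every clustering with the maximal number
of cells is the partition into connected components. -/

def splitCell {α : Type*} [DecidableEq α] (P : Finset (Finset α)) (C K : Finset α) :
    Finset (Finset α) :=
  insert K (insert (C \ K) (P.erase C))

lemma card_splitCell {α : Type*} [DecidableEq α] {P : Finset (Finset α)} {C K : Finset α}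
    (hdisj : ∀ C ∈ P, ∀ D ∈ P, C ≠ D → Disjoint C D) (hC : C ∈ P) (hK : K.Nonempty)
    (hKC : K ⊂ C) : #(splitCell P C K) = #P + 1 := by
  have notMem_erase : ∀ L ⊆ C, L.Nonempty → L ∉ P.erase C := by
    rintro L hLC ⟨x, hx⟩ hL
    obtain ⟨hLC', hLP⟩ := mem_erase.mp hL
    exact disjoint_left.mp (hdisj L hLP C hC hLC') hx (hLC hx)
  have hCK : (C \ K).Nonempty := sdiff_nonempty.mpr hKC.not_subset
  have hK_ne : K ≠ C \ K := by
    intro h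
    have hdisjK : Disjoint K (C \ K) := disjoint_sdiff
    rw [← h] at hdisjK
    exact hK.ne_empty (disjoint_self.mp hdisjK)
  rw [splitCell, card_insert_of_notMem, card_insert_of_notMem (notMem_erase _ sdiff_subset hCK),
    card_erase_add_one hC]
  rw [mem_insert, not_or]
  exact ⟨hK_ne, notMem_erase K hKC.subset hK⟩

variable {k : ℕ}

lemma mem_nbhd_ne {x y : X} (h : y ∈ nbhd k x) : y ≠ x :=
  ne_of_mem_erase ((mem_sort _).mp (List.mem_of_mem_take (List.mem_toFinset.mp h)))

lemma nnGraph_adj_of_mem_nbhd {x y : X} (h : y ∈ nbhd k x) : (nnGraph k).Adj x y :=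
  ⟨(mem_nbhd_ne h).symm, Or.inl h⟩

lemma mem_nnCluster {x y : X} : y ∈ nnCluster k x ↔ (nnGraph k).Reachable x y := by
  simp [nnCluster]

lemma mem_nnCluster_self (x : X) : x ∈ nnCluster k x :=
  mem_nnCluster.mpr (SimpleGraph.Reachable.refl x)

lemma mem_nnCluster_of_adj {a x y : X} (hx : x ∈ nnCluster k a) (h : (nnGraph k).Adj x y) :
    y ∈ nnCluster k a :=
  mem_nnCluster.mpr ((mem_nnCluster.mp hx).trans h.reachable)

lemma nbhd_subset_nnCluster {a x : X} (hx : x ∈ nnCluster k a) : nbhd k x ⊆ nnCluster k a :=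
  fun _ hy => mem_nnCluster_of_adj hx (nnGraph_adj_of_mem_nbhd hy)

lemma nbhd_subset_sdiff_nnCluster {a x : X} {C : Finset X} (hC : nbhd k x ⊆ C)
    (hx : x ∉ nnCluster k a) : nbhd k x ⊆ C \ nnCluster k a :=
  fun _ hy => mem_sdiff.mpr
    ⟨hC hy, fun hya => hx (mem_nnCluster_of_adj hya (nnGraph_adj_of_mem_nbhd hy).symm)⟩

lemma nnCluster_eq_of_mem {x y : X} (h : y ∈ nnCluster k x) : nnCluster k x = nnCluster k y := by
  ext z
  simp only [mem_nnCluster]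
  exact ⟨(mem_nnCluster.mp h).symm.trans, (mem_nnCluster.mp h).trans⟩

lemma maxClusters_isKNNClustering (k : ℕ) : IsKNNClustering k (maxClusters (X := X) k) := by
  simp only [IsKNNClustering, maxClusters, forall_mem_image, mem_univ, true_implies]
  refine ⟨fun a => ⟨a, mem_nnCluster_self a⟩, fun a b hab => ?_, ?_,
    fun _ _ => nbhd_subset_nnCluster⟩
  · refine disjoint_left.mpr fun z hza hzb => hab ?_
    rw [nnCluster_eq_of_mem hza, nnCluster_eq_of_mem hzb]
  · refine eq_univ_of_forall fun x => mem_sup.mpr ⟨nnCluster k x, ?_, mem_nnCluster_self x⟩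
    exact mem_image_of_mem _ (mem_univ x)

variable {P : Finset (Finset X)} {C K : Finset X}

lemma isKNNClustering_splitCell (hP : IsKNNClustering k P) (hC : C ∈ P) (hK : K.Nonempty)
    (hKC : K ⊂ C) (hKcl : ∀ x ∈ K, nbhd k x ⊆ K)
    (hCKcl : ∀ x ∈ C \ K, nbhd k x ⊆ C \ K) :
    IsKNNClustering k (splitCell P C K) := by
  obtain ⟨hne, hdisj, hcov, hcl⟩ := hP
  refine ⟨?_, ?_, ?_, ?_⟩
  · simp only [splitCell, forall_mem_insert]
    exact ⟨hK, sdiff_nonempty.mpr hKC.not_subset, fun D hD => hne D (mem_of_mem_erase hD)⟩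
  · have hdisj_erase : ∀ D ∈ P.erase C, Disjoint C D := fun D hD =>
      hdisj C hC D (mem_of_mem_erase hD) (ne_of_mem_erase hD).symm
    have hpw : (splitCell P C K : Set (Finset X)).PairwiseDisjoint id := by
      rw [splitCell, coe_insert, coe_insert]
      have hpw_erase : (↑(P.erase C) : Set (Finset X)).PairwiseDisjoint id :=
        fun D hD E hE => hdisj D (mem_of_mem_erase hD) E (mem_of_mem_erase hE)
      refine (hpw_erase.insert ?_).insert ?_
      · exact fun D hD _ => (hdisj_erase D hD).mono_left sdiff_subset
      · rintro D (rfl | hD) _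
        · exact disjoint_sdiff
        · exact (hdisj_erase D hD).mono_left hKC.subset
    exact fun D hD E hE => hpw hD hE
  · have hsup : P.sup id = C ∪ (P.erase C).sup id := by
      conv_lhs => rw [← insert_erase hC]
      exact sup_insert
    rw [splitCell, sup_insert, sup_insert, ← hcov, hsup, id, id, sup_eq_union, sup_eq_union,
      ← union_assoc, union_sdiff_of_subset hKC.subset]
  · simp only [splitCell, forall_mem_insert]
    exact ⟨hKcl, hCKcl, fun D hD => hcl D (mem_of_mem_erase hD)⟩

namespace IsKNNClustering

lemma mem_of_adj (hP : IsKNNClustering k P) (hC : C ∈ P) {x y : X} (hx : x ∈ C)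
    (hxy : (nnGraph k).Adj x y) : y ∈ C := by
  obtain ⟨-, hdisj, hcov, hcl⟩ := hP
  rcases hxy.2 with h | h
  · exact hcl C hC x hx h
  · obtain ⟨D, hD, hyD⟩ := mem_sup.mp (hcov ▸ mem_univ y : y ∈ P.sup id)
    obtain rfl : D = C := by
      by_contra hDC
      exact disjoint_left.mp (hdisj D hD C hC hDC) (hcl D hD y hyD h) hx
    exact hyD

lemma nnCluster_subset (hP : IsKNNClustering k P) (hC : C ∈ P) {x : X} (hx : x ∈ C) :
    nnCluster k x ⊆ C := by
  intro y hy
  have h := (SimpleGraph.reachable_iff_reflTransGen x y).mp (mem_nnCluster.mp hy)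
  clear hy
  induction h with
  | refl => exact hx
  | tail _ hadj ih => exact hP.mem_of_adj hC ih hadj

lemma eq_nnCluster_of_maximal (hP : IsKNNClustering k P)
    (hPmax : ∀ R : Finset (Finset X), IsKNNClustering k R → #R ≤ #P) (hC : C ∈ P) {x : X}
    (hx : x ∈ C) : C = nnCluster k x := by
  by_contra hne
  have hKC : nnCluster k x ⊂ C := (hP.nnCluster_subset hC hx).ssubset_of_ne (Ne.symm hne)
  have hK : (nnCluster k x).Nonempty := ⟨x, mem_nnCluster_self x⟩
  have hsplit := isKNNClustering_splitCell hP hC hK hKC (fun _ => nbhd_subset_nnCluster)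
    fun y hy => nbhd_subset_sdiff_nnCluster (hP.2.2.2 C hC y (mem_sdiff.mp hy).1)
      (mem_sdiff.mp hy).2
  have hcard := hPmax _ hsplit
  rw [card_splitCell hP.2.1 hC hK hKC] at hcard
  omega

lemma eq_maxClusters_of_maximal (hP : IsKNNClustering k P)
    (hPmax : ∀ R : Finset (Finset X), IsKNNClustering k R → #R ≤ #P) : P = maxClusters k := by
  refine eq_of_subset_of_card_le (fun C hC => ?_) (hPmax _ (maxClusters_isKNNClustering k))
  obtain ⟨x, hx⟩ := hP.1 C hC
  rw [hP.eq_nnCluster_of_maximal hPmax hC hx]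
  exact mem_image_of_mem _ (mem_univ x)

end IsKNNClustering

theorem maximal_kNNClustering_unique_general (k : ℕ)
    (P Q : Finset (Finset X))
    (hP : IsKNNClustering k P) (hQ : IsKNNClustering k Q)
    (hPmax : ∀ R : Finset (Finset X), IsKNNClustering k R → R.card ≤ P.card)
    (hQmax : ∀ R : Finset (Finset X), IsKNNClustering k R → R.card ≤ Q.card) :
    P = Q :=
  (hP.eq_maxClusters_of_maximal hPmax).trans (hQ.eq_maxClusters_of_maximal hQmax).symm

/-- the k-NN clustering with maximal number of cells is unique. -/
theorem maximal_kNNClustering_unique (k : ℕ) (hcard : k + 1 ≤ Fintype.card X)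
    (P Q : Finset (Finset X))
    (hP : IsKNNClustering k P) (hQ : IsKNNClustering k Q)
    (hPmax : ∀ R : Finset (Finset X), IsKNNClustering k R → R.card ≤ P.card)
    (hQmax : ∀ R : Finset (Finset X), IsKNNClustering k R → R.card ≤ Q.card) :
    P = Q :=
  maximal_kNNClustering_unique_general k P Q hP hQ hPmax hQmax
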